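/- Let (X,d) be a metric space, p ∈ [1,∞), and let μ = a₁μ¹ + a₂μ² where a₁, a₂ > 0 and μ¹, μ² are compactly supported Borel probability measures on X. Assume there exist constants such that W_p(μ², Δ_N) ≤ c · W_p(μ¹, Δ_N) for all large N, and W_p(μ¹, Δ_N) ≤ c' · W_p(μ¹, Δ_{2N}) for all large N. Then there exist constants 0 < a ≤ b with a · W_p(μ¹, Δ_N) ≤ W_p(μ, Δ_N) ≤ b · W_p(μ¹, Δ_N) for all large N. -/

import Mathlib

open MeasureTheory Metric Filter
open scoped ENNReal

noncomputable section

/-- A transport plan (coupling) between two measures. -/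
def IsCoupling {X : Type*} [MeasurableSpace X] (μ ν : Measure X) (π : Measure (X × X)) : Prop :=
  π.map Prod.fst = μ ∧ π.map Prod.snd = ν

/-- The `L^p` Wasserstein distance between two measures of equal mass. -/
def Wp {X : Type*} [PseudoMetricSpace X] [MeasurableSpace X] (p : ℝ) (μ ν : Measure X) : ℝ≥0∞ :=
  ⨅ (π : Measure (X × X)) (_ : IsCoupling μ ν π),
    (∫⁻ z, edist z.1 z.2 ^ p ∂π) ^ (1 / p)

/-- A measure is supported on at most `N` points. -/
def FinSupported {X : Type*} [MeasurableSpace X] (N : ℕ) (ν : Measure X) : Prop :=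
  ∃ S : Finset X, S.card ≤ N ∧ ν ((S : Set X))ᶜ = 0

/-- The `L^p` Wasserstein distance from `μ` to the set `Δ_N` of measures supported
on at most `N` points and having the same total mass as `μ`. -/
def WpDelta {X : Type*} [PseudoMetricSpace X] [MeasurableSpace X]
    (p : ℝ) (μ : Measure X) (N : ℕ) : ℝ≥0∞ :=
  ⨅ (ν : Measure X) (_ : FinSupported N ν ∧ ν Set.univ = μ Set.univ), Wp p μ ν

/-- The (topological) support of a measure: points all of whose open neighborhoods
have positive measure. -/
def measSupport {X : Type*} [TopologicalSpace X] [MeasurableSpace X] (μ : Measure X) : Set X :=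
  {x | ∀ U : Set X, IsOpen U → x ∈ U → 0 < μ U}

/-!
Weighting a plan from `μ = a₁ μ₁ + a₂ μ₂` to an `N`-point measure by the density of `a₁ μ₁`
with respect to `μ` gives a plan from `a₁ μ₁` to a measure with at most `N` atoms, so
`a₁^(1/p) W_p(μ₁, Δ_N) ≤ W_p(μ, Δ_N)`. Conversely, adding `N/2`-point approximations of `a₁ μ₁`
and `a₂ μ₂` and using `(x + y)^(1/p) ≤ x^(1/p) + y^(1/p)` gives
`W_p(μ, Δ_N) ≤ a₁^(1/p) W_p(μ₁, Δ_{N/2}) + a₂^(1/p) W_p(μ₂, Δ_{N/2})`, which the two hypotheses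
bound by a multiple of `W_p(μ₁, Δ_N)`.
-/

namespace FinSupported

variable {X : Type*} [MeasurableSpace X] {M N : ℕ} {ν ν₁ ν₂ : Measure X}

lemma mono_card (hMN : M ≤ N) (h : FinSupported M ν) : FinSupported N ν :=
  let ⟨S, hS, hS0⟩ := h
  ⟨S, hS.trans hMN, hS0⟩

lemma mono {ν' : Measure X} (h : FinSupported N ν) (hle : ν' ≤ ν) : FinSupported N ν' :=
  let ⟨S, hS, hS0⟩ := h
  ⟨S, hS, nonpos_iff_eq_zero.1 ((hle _).trans_eq hS0)⟩

lemma smul (h : FinSupported N ν) (c : ℝ≥0∞) : FinSupported N (c • ν) :=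
  let ⟨S, hS, hS0⟩ := h
  ⟨S, hS, by simp [hS0]⟩

lemma add (h₁ : FinSupported M ν₁) (h₂ : FinSupported N ν₂) : FinSupported (M + N) (ν₁ + ν₂) := by
  classical
  obtain ⟨S₁, hS₁, hS₁0⟩ := h₁
  obtain ⟨S₂, hS₂, hS₂0⟩ := h₂
  refine ⟨S₁ ∪ S₂, (Finset.card_union_le _ _).trans (add_le_add hS₁ hS₂), ?_⟩
  simp only [Measure.add_apply, Finset.coe_union, Set.compl_union, add_eq_zero]
  exact ⟨measure_mono_null Set.inter_subset_left hS₁0,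
    measure_mono_null Set.inter_subset_right hS₂0⟩

end FinSupported

namespace IsCoupling

variable {X : Type*} [MeasurableSpace X] {μ ν μ₁ ν₁ μ₂ ν₂ : Measure X} {π π₁ π₂ : Measure (X × X)}

lemma smul (h : IsCoupling μ ν π) (c : ℝ≥0∞) : IsCoupling (c • μ) (c • ν) (c • π) :=
  ⟨by rw [Measure.map_smul, h.1], by rw [Measure.map_smul, h.2]⟩

lemma add (h₁ : IsCoupling μ₁ ν₁ π₁) (h₂ : IsCoupling μ₂ ν₂ π₂) :
    IsCoupling (μ₁ + μ₂) (ν₁ + ν₂) (π₁ + π₂) :=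
  ⟨by rw [Measure.map_add _ _ measurable_fst, h₁.1, h₂.1],
    by rw [Measure.map_add _ _ measurable_snd, h₁.2, h₂.2]⟩

/-- The sub-plan weights `π` by the density `dρ/dμ ≤ 1` of its first coordinate. -/
lemma exists_le_isCoupling_of_le [SigmaFinite μ] (h : IsCoupling μ ν π) {ρ : Measure X}
    (hρ : ρ ≤ μ) : ∃ π' ≤ π, IsCoupling ρ (π'.map Prod.snd) π' := by
  have := Measure.sigmaFinite_of_le μ hρ
  set g := ρ.rnDeriv μ
  have hg : Measurable g := Measure.measurable_rnDeriv _ _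
  have hg_le_one : ∀ᵐ z ∂π, g z.1 ≤ 1 :=
    (Measure.QuasiMeasurePreserving.tendsto_ae ⟨measurable_fst, h.1 ▸ .rfl⟩).eventually
      (Measure.rnDeriv_le_one_of_le hρ)
  refine ⟨π.withDensity (fun z => g z.1), ?_, ?_, rfl⟩
  · refine Measure.le_iff.2 fun s hs => ?_
    rw [withDensity_apply _ hs]
    calc ∫⁻ z in s, g z.1 ∂π ≤ ∫⁻ _ in s, 1 ∂π := lintegral_mono_ae (ae_restrict_of_ae hg_le_one)
      _ = π s := by simp
  · ext s hs
    rw [Measure.map_apply measurable_fst hs, withDensity_apply _ (measurable_fst hs),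
      ← setLIntegral_map hs hg measurable_fst, h.1, ← withDensity_apply _ hs,
      Measure.withDensity_rnDeriv_eq _ _ hρ.absolutelyContinuous]

end IsCoupling

section Wasserstein

variable {X : Type*} [PseudoMetricSpace X] [MeasurableSpace X] {p : ℝ} {N : ℕ}
  {μ ν μ₁ ν₁ μ₂ ν₂ : Measure X}

lemma wp_le_cost {π : Measure (X × X)} (h : IsCoupling μ ν π) :
    Wp p μ ν ≤ (∫⁻ z, edist z.1 z.2 ^ p ∂π) ^ (1 / p) :=
  iInf₂_le π h

lemma wp_zero (hp : 0 < p) : Wp p (0 : Measure X) 0 = 0 :=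
  le_antisymm ((wp_le_cost (π := 0) ⟨by simp, by simp⟩).trans_eq (by simp [hp])) bot_le

lemma wp_smul_le (hp : 0 < p) {c : ℝ≥0∞} (hc : c ≠ ⊤) :
    Wp p (c • μ) (c • ν) ≤ c ^ (1 / p) * Wp p μ ν := by
  rcases eq_or_ne c 0 with rfl | hc0
  · simp [wp_zero hp]
  have hc' : c ^ (1 / p) ≠ ⊤ := ENNReal.rpow_ne_top_of_nonneg (by positivity) hc
  have hc0' : c ^ (1 / p) ≠ 0 := by simp [ENNReal.rpow_eq_zero_iff, hc0, hc, hp]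
  simp only [Wp, ENNReal.mul_iInf_of_ne hc0' hc']
  refine le_iInf₂ fun π hπ => (wp_le_cost (hπ.smul c)).trans_eq ?_
  rw [lintegral_smul_measure, smul_eq_mul, ENNReal.mul_rpow_of_nonneg _ _ (by positivity)]

lemma wp_add_le (hp : 1 ≤ p) :
    Wp p (μ₁ + μ₂) (ν₁ + ν₂) ≤ Wp p μ₁ ν₁ + Wp p μ₂ ν₂ := by
  simp only [Wp, ENNReal.iInf_add, ENNReal.add_iInf]
  refine le_iInf₂ fun π₂ hπ₂ => le_iInf₂ fun π₁ hπ₁ => (wp_le_cost (hπ₁.add hπ₂)).trans ?_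
  rw [lintegral_add_measure]
  exact ENNReal.rpow_add_le_add_rpow _ _ (by positivity) (div_le_one_of_le₀ hp (by positivity))

lemma wpDelta_le_wp (hν : FinSupported N ν) (hmass : ν Set.univ = μ Set.univ) :
    WpDelta p μ N ≤ Wp p μ ν :=
  iInf₂_le ν ⟨hν, hmass⟩

lemma wpDelta_antitone : Antitone (WpDelta p μ) := fun _ _ hMN =>
  le_iInf₂ fun _ hν => wpDelta_le_wp (hν.1.mono_card hMN) hν.2

lemma wpDelta_zero (hp : 0 < p) : WpDelta p (0 : Measure X) N = 0 :=
  le_antisymm ((wpDelta_le_wp ⟨∅, by simp, by simp⟩ rfl).trans_eq (wp_zero hp)) bot_le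

lemma wpDelta_smul_le (hp : 0 < p) {c : ℝ≥0∞} (hc : c ≠ ⊤) :
    WpDelta p (c • μ) N ≤ c ^ (1 / p) * WpDelta p μ N := by
  rcases eq_or_ne c 0 with rfl | hc0
  · simp [wpDelta_zero hp]
  have hc' : c ^ (1 / p) ≠ ⊤ := ENNReal.rpow_ne_top_of_nonneg (by positivity) hc
  have hc0' : c ^ (1 / p) ≠ 0 := by simp [ENNReal.rpow_eq_zero_iff, hc0, hc, hp]
  simp only [WpDelta, ENNReal.mul_iInf_of_ne hc0' hc']
  exact le_iInf₂ fun ν hν =>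
    (wpDelta_le_wp (hν.1.smul c) (by simp [hν.2])).trans (wp_smul_le hp hc)

lemma wpDelta_smul (hp : 0 < p) {c : ℝ≥0∞} (hc0 : c ≠ 0) (hc : c ≠ ⊤) :
    WpDelta p (c • μ) N = c ^ (1 / p) * WpDelta p μ N := by
  refine le_antisymm (wpDelta_smul_le hp hc) ?_
  calc c ^ (1 / p) * WpDelta p μ N = c ^ (1 / p) * WpDelta p (c⁻¹ • c • μ) N := by
        rw [smul_smul, ENNReal.inv_mul_cancel hc0 hc, one_smul]
    _ ≤ c ^ (1 / p) * (c⁻¹ ^ (1 / p) * WpDelta p (c • μ) N) :=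
        mul_le_mul_right (wpDelta_smul_le hp (ENNReal.inv_ne_top.2 hc0)) _
    _ = WpDelta p (c • μ) N := by
        rw [← mul_assoc, ← ENNReal.mul_rpow_of_nonneg _ _ (by positivity),
          ENNReal.mul_inv_cancel hc0 hc, ENNReal.one_rpow, one_mul]

lemma wpDelta_add_le (hp : 1 ≤ p) {M : ℕ} :
    WpDelta p (μ₁ + μ₂) (M + N) ≤ WpDelta p μ₁ M + WpDelta p μ₂ N := by
  simp only [WpDelta, ENNReal.iInf_add, ENNReal.add_iInf]
  exact le_iInf₂ fun ν₂ hν₂ => le_iInf₂ fun ν₁ hν₁ =>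
    (wpDelta_le_wp (hν₁.1.add hν₂.1) (by simp [hν₁.2, hν₂.2])).trans (wp_add_le hp)

lemma wpDelta_mono [SigmaFinite μ] (hp : 0 ≤ p) {ρ : Measure X} (hρ : ρ ≤ μ) :
    WpDelta p ρ N ≤ WpDelta p μ N := by
  refine le_iInf₂ fun ν hν => le_iInf₂ fun π hπ => ?_
  obtain ⟨π', hπ'π, hπ'⟩ := hπ.exists_le_isCoupling_of_le hρ
  have hmass : π'.map Prod.snd Set.univ = ρ Set.univ := by
    rw [← hπ'.1, Measure.map_apply measurable_snd .univ, Measure.map_apply measurable_fst .univ,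
      Set.preimage_univ, Set.preimage_univ]
  calc WpDelta p ρ N ≤ Wp p ρ (π'.map Prod.snd) :=
        wpDelta_le_wp (hν.1.mono (hπ.2 ▸ Measure.map_mono hπ'π measurable_snd)) hmass
    _ ≤ _ := (wp_le_cost hπ').trans (by gcongr)

end Wasserstein

/-- The floor in `N / 2` costs a second application of the doubling bound. -/
lemma eventually_le_sq_mul_of_doubling {f : ℕ → ℝ≥0∞} (hf : Antitone f) {C : ℝ≥0∞}
    (h : ∀ᶠ N in atTop, f N ≤ C * f (2 * N)) : ∀ᶠ N in atTop, f (N / 2) ≤ C ^ 2 * f N := by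
  have hhalf := (Nat.tendsto_div_const_atTop two_ne_zero).eventually h
  have hdouble : ∀ᶠ N in atTop, f (2 * (N / 2)) ≤ C * f (2 * (2 * (N / 2))) :=
    ((tendsto_id.const_mul_atTop' two_pos).comp
      (Nat.tendsto_div_const_atTop two_ne_zero)).eventually h
  filter_upwards [hhalf, hdouble, eventually_ge_atTop 2] with N h₁ h₂ hN
  calc f (N / 2) ≤ C * f (2 * (N / 2)) := h₁
    _ ≤ C * (C * f (2 * (2 * (N / 2)))) := by gcongr
    _ ≤ C * (C * f N) := by gcongr; exact hf (by omega)
    _ = C ^ 2 * f N := by ring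

theorem combination_two_measures_general
    {X : Type*} [MetricSpace X] [MeasurableSpace X]
    (p : ℝ) (hp : 1 ≤ p)
    (a₁ a₂ : ℝ) (ha₁ : 0 < a₁)
    (μ₁ μ₂ : Measure X) [IsProbabilityMeasure μ₁] [IsProbabilityMeasure μ₂]
    (μ : Measure X) (hμ : μ = ENNReal.ofReal a₁ • μ₁ + ENNReal.ofReal a₂ • μ₂)
    (c c' : ℝ)
    (hc : ∀ᶠ N : ℕ in atTop, WpDelta p μ₂ N ≤ ENNReal.ofReal c * WpDelta p μ₁ N)
    (hc' : ∀ᶠ N : ℕ in atTop, WpDelta p μ₁ N ≤ ENNReal.ofReal c' * WpDelta p μ₁ (2 * N)) :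
    ∃ a b : ℝ, 0 < a ∧ a ≤ b ∧ ∀ᶠ N : ℕ in atTop,
      ENNReal.ofReal a * WpDelta p μ₁ N ≤ WpDelta p μ N ∧
      WpDelta p μ N ≤ ENNReal.ofReal b * WpDelta p μ₁ N := by
  have hp₀ : 0 < p := zero_lt_one.trans_le hp
  set A := ENNReal.ofReal a₁ ^ (1 / p)
  set B := ENNReal.ofReal a₂ ^ (1 / p)
  have hA : A ≠ ⊤ := ENNReal.rpow_ne_top_of_nonneg (by positivity) ENNReal.ofReal_ne_top
  have hA₀ : A ≠ 0 := by simp [A, ENNReal.rpow_eq_zero_iff, ha₁, hp₀]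
  have : IsFiniteMeasure μ := ⟨by simp [hμ, ENNReal.add_lt_top]⟩
  have lower (N : ℕ) : A * WpDelta p μ₁ N ≤ WpDelta p μ N := by
    rw [← wpDelta_smul hp₀ (by simpa using ha₁) ENNReal.ofReal_ne_top]
    exact wpDelta_mono hp₀.le (hμ ▸ Measure.le_add_right le_rfl)
  have upper (N : ℕ) : WpDelta p μ N ≤ A * WpDelta p μ₁ (N / 2) + B * WpDelta p μ₂ (N / 2) := by
    calc WpDelta p μ N ≤ WpDelta p μ (N / 2 + N / 2) := wpDelta_antitone (by omega)
      _ ≤ _ := hμ ▸ (wpDelta_add_le hp).trans (add_le_add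
          (wpDelta_smul_le hp₀ ENNReal.ofReal_ne_top) (wpDelta_smul_le hp₀ ENNReal.ofReal_ne_top))
  set C := (A + B * ENNReal.ofReal c) * ENNReal.ofReal c' ^ 2
  have hC : C ≠ ⊤ := by finiteness
  refine ⟨A.toReal, max A.toReal C.toReal, ENNReal.toReal_pos hA₀ hA, le_max_left _ _, ?_⟩
  filter_upwards [(Nat.tendsto_div_const_atTop two_ne_zero).eventually hc,
    eventually_le_sq_mul_of_doubling wpDelta_antitone hc'] with N hμ₂N hμ₁N
  refine ⟨by rw [ENNReal.ofReal_toReal hA]; exact lower N, ?_⟩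
  calc WpDelta p μ N ≤ A * WpDelta p μ₁ (N / 2) + B * WpDelta p μ₂ (N / 2) := upper N
    _ ≤ (A + B * ENNReal.ofReal c) * WpDelta p μ₁ (N / 2) := by
        rw [add_mul, mul_assoc]; gcongr
    _ ≤ C * WpDelta p μ₁ N := by rw [mul_assoc]; gcongr
    _ ≤ ENNReal.ofReal (max A.toReal C.toReal) * WpDelta p μ₁ N := by
        gcongr
        exact (ENNReal.le_ofReal_iff_toReal_le hC (by positivity)).2 (le_max_right _ _)

theorem combination_two_measures
    {X : Type*} [MetricSpace X] [MeasurableSpace X] [BorelSpace X]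
    (p : ℝ) (hp : 1 ≤ p)
    (a₁ a₂ : ℝ) (ha₁ : 0 < a₁) (ha₂ : 0 < a₂)
    (μ₁ μ₂ : Measure X) [IsProbabilityMeasure μ₁] [IsProbabilityMeasure μ₂]
    (hμ₁c : ∃ K : Set X, IsCompact K ∧ μ₁ Kᶜ = 0)
    (hμ₂c : ∃ K : Set X, IsCompact K ∧ μ₂ Kᶜ = 0)
    (μ : Measure X) (hμ : μ = ENNReal.ofReal a₁ • μ₁ + ENNReal.ofReal a₂ • μ₂)
    (c c' : ℝ)
    (hc : ∀ᶠ N : ℕ in atTop, WpDelta p μ₂ N ≤ ENNReal.ofReal c * WpDelta p μ₁ N)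
    (hc' : ∀ᶠ N : ℕ in atTop, WpDelta p μ₁ N ≤ ENNReal.ofReal c' * WpDelta p μ₁ (2 * N)) :
    ∃ a b : ℝ, 0 < a ∧ a ≤ b ∧ ∀ᶠ N : ℕ in atTop,
      ENNReal.ofReal a * WpDelta p μ₁ N ≤ WpDelta p μ N ∧
      WpDelta p μ N ≤ ENNReal.ofReal b * WpDelta p μ₁ N :=
  combination_two_measures_general p hp a₁ a₂ ha₁ μ₁ μ₂ μ hμ c c' hc hc'
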